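/- arXiv:2212.13540 — 4 statements merged into one kernel-verified Lean document; each statement's English description precedes it below -/
import Mathlib

section
/- Let S be a finite index set containing a distinguished element s0, let p : S → R be a probability vector (p(s) ≥ 0, ∑_{s∈S} p(s) = 1), and let φ : S → R^d with φ(s0) = 0. If κ > 0 satisfies p(s)p(s') ≥ κ for all s, s' ∈ S, then ∑_{s∈S} p(s)φ(s)φ(s)^T − ∑_{s,s'∈S} p(s)p(s')φ(s)φ(s')^T ⪰ κ ∑_{s∈S\{s0}} φ(s)φ(s)^T. -/
/-!
Write `a s = φ s ⬝ᵥ x`. The quadratic form of the matrix at `x` is the variance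
`∑ p a² - (∑ p a)²` of `a` under `p`, minus `κ ∑_{s ≠ s0} a²`. Since `a s0 = 0`, both sums in
the variance only run over `s ≠ s0`, where the total mass is `1 - p s0`; Cauchy–Schwarz then
bounds the variance below by `p s0 ∑_{s ≠ s0} p a²`, which dominates `κ ∑_{s ≠ s0} a²`
because `κ ≤ p s0 * p s`.
-/

open Matrix Finset

theorem mul_sum_erase_le_sum_mul_sq_sub_sq {ι R : Type*} [DecidableEq ι] [CommRing R]
    [LinearOrder R] [IsStrictOrderedRing R] {S : Finset ι} {s0 : ι} {p a : ι → R}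
    (hs0 : s0 ∈ S) (hp : ∀ s ∈ S, 0 ≤ p s) (hp1 : ∑ s ∈ S, p s = 1) (ha0 : a s0 = 0) :
    p s0 * ∑ s ∈ S.erase s0, p s * a s ^ 2 ≤
      ∑ s ∈ S, p s * a s ^ 2 - (∑ s ∈ S, p s * a s) ^ 2 := by
  have hsq : ∑ s ∈ S.erase s0, p s * a s ^ 2 = ∑ s ∈ S, p s * a s ^ 2 :=
    sum_erase S (by simp [ha0])
  have hlin : ∑ s ∈ S.erase s0, p s * a s = ∑ s ∈ S, p s * a s :=
    sum_erase S (by simp [ha0])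
  have hmass : ∑ s ∈ S.erase s0, p s = 1 - p s0 := by
    rw [← hp1, ← add_sum_erase S p hs0, add_sub_cancel_left]
  have hCS : (∑ s ∈ S.erase s0, p s * a s) ^ 2 ≤
      (∑ s ∈ S.erase s0, p s) * ∑ s ∈ S.erase s0, p s * a s ^ 2 :=
    sum_sq_le_sum_mul_sum_of_sq_le_mul _ (fun s hs => hp s (mem_of_mem_erase hs))
      (fun s hs => mul_nonneg (hp s (mem_of_mem_erase hs)) (sq_nonneg _))
      (fun s _ => le_of_eq (by ring))
  rw [← hsq, ← hlin]
  rw [hmass] at hCS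
  linarith

theorem dotProduct_vecMulVec_mulVec {n R : Type*} [Fintype n] [CommSemiring R] (u v x : n → R) :
    x ⬝ᵥ (vecMulVec u v *ᵥ x) = (u ⬝ᵥ x) * (v ⬝ᵥ x) := by
  rw [vecMulVec_mulVec, dotProduct_smul, op_smul_eq_mul, dotProduct_comm]

theorem sum_sum_smul_vecMulVec {ι κ n R : Type*} [CommSemiring R] (S : Finset ι) (T : Finset κ)
    (p : ι → R) (q : κ → R) (u : ι → n → R) (v : κ → n → R) :
    ∑ s ∈ S, ∑ t ∈ T, (p s * q t) • vecMulVec (u s) (v t) =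
      vecMulVec (∑ s ∈ S, p s • u s) (∑ t ∈ T, q t • v t) := by
  ext i j
  simp only [Matrix.sum_apply, Matrix.smul_apply, vecMulVec_apply, Finset.sum_apply,
    Pi.smul_apply, smul_eq_mul, sum_mul_sum]
  exact sum_congr rfl fun s _ => sum_congr rfl fun t _ => by ring

theorem isSelfAdjoint_vecMulVec_self {n R : Type*} [CommSemiring R] [StarRing R] [TrivialStar R]
    (u : n → R) : IsSelfAdjoint (vecMulVec u u) := by
  rw [IsSelfAdjoint, star_eq_conjTranspose, conjTranspose_vecMulVec, star_trivial]

theorem stmt2_general {ι : Type*} [DecidableEq ι] (d : ℕ) (S : Finset ι) (s0 : ι) (hs0 : s0 ∈ S)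
    (p : ι → ℝ) (hp : ∀ s ∈ S, 0 ≤ p s) (hp1 : ∑ s ∈ S, p s = 1)
    (φ : ι → Fin d → ℝ) (hφ0 : φ s0 = 0)
    (κ : ℝ) (hκp : ∀ s ∈ S, ∀ s' ∈ S, κ ≤ p s * p s') :
    Matrix.PosSemidef
      (((∑ s ∈ S, p s • vecMulVec (φ s) (φ s)) -
          ∑ s ∈ S, ∑ s' ∈ S, (p s * p s') • vecMulVec (φ s) (φ s')) -
        κ • ∑ s ∈ S.erase s0, vecMulVec (φ s) (φ s)) := by
  rw [sum_sum_smul_vecMulVec]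
  refine posSemidef_iff_dotProduct_mulVec.mpr ⟨?_, fun x => ?_⟩
  · rw [isHermitian_iff_isSelfAdjoint]
    have hφ := fun s => isSelfAdjoint_vecMulVec_self (φ s)
    exact ((isSelfAdjoint_sum S fun s _ => (IsSelfAdjoint.all (p s)).smul (hφ s)).sub
      (isSelfAdjoint_vecMulVec_self _)).sub
      ((IsSelfAdjoint.all κ).smul (isSelfAdjoint_sum _ fun s _ => hφ s))
  · set a : ι → ℝ := fun s => φ s ⬝ᵥ x
    have hvar := mul_sum_erase_le_sum_mul_sq_sub_sq (a := a) hs0 hp hp1 (by simp [a, hφ0])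
    have hdom : κ * ∑ s ∈ S.erase s0, a s ^ 2 ≤ p s0 * ∑ s ∈ S.erase s0, p s * a s ^ 2 := by
      rw [mul_sum, mul_sum]
      refine sum_le_sum fun s hs => ?_
      rw [← mul_assoc]
      exact mul_le_mul_of_nonneg_right (hκp s0 hs0 s (mem_of_mem_erase hs)) (sq_nonneg _)
    simp only [star_trivial, sub_mulVec, smul_mulVec, sum_mulVec, dotProduct_sub,
      dotProduct_smul, dotProduct_sum, dotProduct_vecMulVec_mulVec, sum_dotProduct,
      smul_dotProduct, smul_eq_mul]
    simp only [a, sq] at hvar hdom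
    linarith

theorem stmt2 {ι : Type*} [DecidableEq ι] (d : ℕ) (S : Finset ι) (s0 : ι) (hs0 : s0 ∈ S)
    (p : ι → ℝ) (hp : ∀ s ∈ S, 0 ≤ p s) (hp1 : ∑ s ∈ S, p s = 1)
    (φ : ι → Fin d → ℝ) (hφ0 : φ s0 = 0)
    (κ : ℝ) (hκ : 0 < κ) (hκp : ∀ s ∈ S, ∀ s' ∈ S, κ ≤ p s * p s') :
    Matrix.PosSemidef
      (((∑ s ∈ S, p s • vecMulVec (φ s) (φ s)) -
          ∑ s ∈ S, ∑ s' ∈ S, (p s * p s') • vecMulVec (φ s) (φ s')) -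
        κ • ∑ s ∈ S.erase s0, vecMulVec (φ s) (φ s)) :=
  stmt2_general d S s0 hs0 p hp hp1 φ hφ0 κ hκp
end

section
/- Let A be a d×d symmetric positive definite real matrix and let x_1, …, x_m ∈ R^d. Then det(A + ∑_{j=1}^m x_j x_j^T) ≥ det(A) · (1 + ∑_{j=1}^m ‖x_j‖²_{A^{-1}}), where ‖x‖²_{A^{-1}} = x^T A^{-1} x. -/
/-!
Write `A + M = A (1 + A⁻¹ M)` with `M = Bᴴ B`. By the Weinstein–Aronszajn identity,
`det (1 + A⁻¹ Bᴴ B) = det (1 + B A⁻¹ Bᴴ)`, and `C = B A⁻¹ Bᴴ` is positive semidefinite with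
`tr C = tr (A⁻¹ M) = ∑ⱼ xⱼᵀ A⁻¹ xⱼ`. For such `C` with eigenvalues `λᵢ ≥ 0`,
`det (1 + C) = ∏ (1 + λᵢ) ≥ 1 + ∑ λᵢ = 1 + tr C`.
-/

open Matrix Finset

theorem Finset.one_add_sum_le_prod_one_add {ι R : Type*} [CommSemiring R] [PartialOrder R]
    [IsOrderedRing R] (s : Finset ι) {f : ι → R} (hf : ∀ i ∈ s, 0 ≤ f i) :
    1 + ∑ i ∈ s, f i ≤ ∏ i ∈ s, (1 + f i) := by
  induction s using cons_induction with
  | empty => simp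
  | cons a s ha ih =>
    have hs := ih fun i hi => hf i (mem_cons_of_mem hi)
    have hfa := hf a (mem_cons_self a s)
    have one_le : 1 ≤ ∏ i ∈ s, (1 + f i) := le_trans (le_add_of_nonneg_right (sum_nonneg
      fun i hi => hf i (mem_cons_of_mem hi))) hs
    calc 1 + ∑ i ∈ cons a s ha, f i = (1 + ∑ i ∈ s, f i) + f a * 1 := by
          rw [sum_cons, mul_one, add_comm (f a), add_assoc]
      _ ≤ ∏ i ∈ s, (1 + f i) + f a * ∏ i ∈ s, (1 + f i) := by gcongr
      _ = ∏ i ∈ cons a s ha, (1 + f i) := by rw [prod_cons]; ring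

namespace Matrix

variable {n : Type*} [Fintype n]

theorem trace_mul_vecMulVec_self {R : Type*} [CommSemiring R] (B : Matrix n n R) (x : n → R) :
    (B * vecMulVec x x).trace = x ⬝ᵥ B *ᵥ x := by
  rw [mul_vecMulVec, trace_vecMulVec, dotProduct_comm]

variable [DecidableEq n]

theorem PosSemidef.one_add_trace_le_det_one_add {C : Matrix n n ℝ} (hC : C.PosSemidef) :
    1 + C.trace ≤ (1 + C).det := by
  have hdet : (1 + C).det = ∏ i, (1 + hC.isHermitian.eigenvalues i) := by
    conv_lhs => rw [hC.isHermitian.spectral_theorem, ← map_one (Unitary.conjStarAlgAut ℝ _ _),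
      ← map_add, det_map, ← diagonal_one, diagonal_add, det_diagonal]
    rfl
  rw [hdet, hC.isHermitian.trace_eq_sum_eigenvalues]
  exact one_add_sum_le_prod_one_add _ fun i _ => hC.eigenvalues_nonneg i

open scoped MatrixOrder in
theorem PosDef.det_mul_one_add_trace_inv_mul_le_det_add {A M : Matrix n n ℝ} (hA : A.PosDef)
    (hM : M.PosSemidef) : A.det * (1 + (A⁻¹ * M).trace) ≤ (A + M).det := by
  obtain ⟨B, rfl⟩ := CStarAlgebra.nonneg_iff_eq_star_mul_self.mp hM.nonneg
  have hfactor : A * (1 + A⁻¹ * star B * B) = A + star B * B := by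
    rw [mul_add, mul_one, mul_assoc, mul_nonsing_inv_cancel_left _ _ hA.det_pos.ne'.isUnit]
  have hdet : (A + star B * B).det = A.det * (1 + B * (A⁻¹ * star B)).det := by
    rw [← hfactor, det_mul, det_one_add_mul_comm]
  have htrace : (A⁻¹ * (star B * B)).trace = (B * (A⁻¹ * star B)).trace := by
    rw [← mul_assoc, trace_mul_comm]
  rw [hdet, htrace]
  gcongr
  · exact hA.det_pos.le
  · rw [← mul_assoc]
    exact (hA.inv.posSemidef.mul_mul_conjTranspose_same B).one_add_trace_le_det_one_add

end Matrix

theorem stmt4 (d m : ℕ) (A : Matrix (Fin d) (Fin d) ℝ) (hA : A.PosDef)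
    (x : Fin m → Fin d → ℝ) :
    A.det * (1 + ∑ j, x j ⬝ᵥ A⁻¹ *ᵥ x j) ≤
      (A + ∑ j, vecMulVec (x j) (x j)).det := by
  have hM : (∑ j, vecMulVec (x j) (x j)).PosSemidef :=
    posSemidef_sum _ fun j _ => by simpa using posSemidef_vecMulVec_self_star (x j)
  have htrace : (A⁻¹ * ∑ j, vecMulVec (x j) (x j)).trace = ∑ j, x j ⬝ᵥ A⁻¹ *ᵥ x j := by
    simp only [mul_sum, trace_sum, trace_mul_vecMulVec_self]
  simpa only [htrace] using hA.det_mul_one_add_trace_inv_mul_le_det_add hM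
end

section
/- Let S be a finite nonempty set, V : S → [0, H], φ : S → R^d, and define f(θ) = ∑_{s∈S} p(s, θ) V(s) where p(s, θ) = exp(φ(s)^T θ)/∑_{s'∈S} exp(φ(s')^T θ). Let A be a symmetric positive definite d×d matrix. Then for any θ₁, θ₂ ∈ R^d, |f(θ₁) − f(θ₂)| ≤ H · (max_{s∈S} ‖φ(s)‖_{A^{-1}}) · ‖θ₁ − θ₂‖_A. -/
/-!
Along the segment `θ(t) = θ₂ + t (θ₁ - θ₂)` the softmax average `g(t) = E_{p(θ(t))} V` has
derivative `∑_{s,s'} p_s p_{s'} b_s (V_s - V_{s'})` with `b_s = φ(s) ⬝ (θ₁ - θ₂)`, which is at most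
`H · max_s |b_s|` in absolute value; the mean value theorem turns this into the same bound on
`|g 1 - g 0|`. Finally `φ ⬝ Δ = ⟪φ, A Δ⟫_{A⁻¹}`, so Cauchy–Schwarz for the `A⁻¹`-inner product gives
`|b_s| ≤ ‖φ(s)‖_{A⁻¹} ‖θ₁ - θ₂‖_A`.
-/

open Finset Matrix

lemma abs_dotProduct_mulVec_le {n : Type*} [Fintype n] {M : Matrix n n ℝ} (hM : M.PosSemidef)
    (x y : n → ℝ) :
    |x ⬝ᵥ M *ᵥ y| ≤ √(x ⬝ᵥ M *ᵥ x) * √(y ⬝ᵥ M *ᵥ y) := by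
  let := M.toSeminormedAddCommGroup hM
  let := M.toInnerProductSpace hM
  have hinner (u v : n → ℝ) : inner ℝ u v = u ⬝ᵥ M *ᵥ v := dotProduct_comm _ _
  simpa only [norm_eq_sqrt_re_inner (𝕜 := ℝ), hinner, RCLike.re_to_real]
    using abs_real_inner_le_norm x y

lemma abs_dotProduct_le_of_posDef {n : Type*} [Fintype n] [DecidableEq n] {A : Matrix n n ℝ}
    (hA : A.PosDef) (v w : n → ℝ) :
    |v ⬝ᵥ w| ≤ √(v ⬝ᵥ A⁻¹ *ᵥ v) * √(w ⬝ᵥ A *ᵥ w) := by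
  have hAA : A⁻¹ * A = 1 := nonsing_inv_mul A (isUnit_iff_ne_zero.mpr hA.det_pos.ne')
  simpa only [mulVec_mulVec, hAA, one_mulVec, dotProduct_comm (A *ᵥ w) w]
    using abs_dotProduct_mulVec_le hA.inv.posSemidef v (A *ᵥ w)

section Softmax

variable {ι : Type*} (S : Finset ι)

noncomputable def softmaxAvg (V z : ι → ℝ) : ℝ :=
  (∑ s ∈ S, Real.exp (z s) * V s) / ∑ s ∈ S, Real.exp (z s)

lemma sum_mul_sum_sub_sum_mul_sum (w b V : ι → ℝ) :
    (∑ s ∈ S, b s * w s * V s) * (∑ s ∈ S, w s) - (∑ s ∈ S, w s * V s) * ∑ s ∈ S, b s * w s =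
      ∑ s ∈ S, ∑ s' ∈ S, w s * w s' * (b s * (V s - V s')) := by
  simp only [sum_mul_sum, mul_sub, sum_sub_distrib]
  congr 1
  · exact sum_congr rfl fun s _ => sum_congr rfl fun s' _ => by ring
  · rw [sum_comm]
    exact sum_congr rfl fun s _ => sum_congr rfl fun s' _ => by ring

lemma abs_sum_sum_mul_mul_sub_le {w b V : ι → ℝ} {B H : ℝ} (hw : ∀ s ∈ S, 0 ≤ w s)
    (hb : ∀ s ∈ S, |b s| ≤ B) (hV : ∀ s ∈ S, ∀ s' ∈ S, |V s - V s'| ≤ H) :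
    |∑ s ∈ S, ∑ s' ∈ S, w s * w s' * (b s * (V s - V s'))| ≤ H * B * (∑ s ∈ S, w s) ^ 2 := by
  calc |∑ s ∈ S, ∑ s' ∈ S, w s * w s' * (b s * (V s - V s'))|
      ≤ ∑ s ∈ S, ∑ s' ∈ S, |w s * w s' * (b s * (V s - V s'))| :=
        (abs_sum_le_sum_abs _ _).trans (sum_le_sum fun s _ => abs_sum_le_sum_abs _ _)
    _ ≤ ∑ s ∈ S, ∑ s' ∈ S, w s * w s' * (H * B) := by
        refine sum_le_sum fun s hs => sum_le_sum fun s' hs' => ?_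
        rw [abs_mul, abs_of_nonneg (mul_nonneg (hw s hs) (hw s' hs')), abs_mul, mul_comm H]
        gcongr
        · exact mul_nonneg (hw s hs) (hw s' hs')
        · exact (abs_nonneg _).trans (hb s hs)
        · exact hb s hs
        · exact hV s hs s' hs'
    _ = H * B * (∑ s ∈ S, w s) ^ 2 := by
        rw [sq, sum_mul_sum, mul_sum]
        exact sum_congr rfl fun s _ => by rw [mul_sum]; exact sum_congr rfl fun s' _ => by ring

lemma hasDerivAt_softmaxAvg_line {S : Finset ι} (hS : S.Nonempty) (V a b : ι → ℝ) (t : ℝ) :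
    HasDerivAt (fun t => softmaxAvg S V fun s => a s + t * b s)
      ((∑ s ∈ S, ∑ s' ∈ S, Real.exp (a s + t * b s) * Real.exp (a s' + t * b s') *
          (b s * (V s - V s'))) / (∑ s ∈ S, Real.exp (a s + t * b s)) ^ 2) t := by
  have hw (s : ι) : HasDerivAt (fun t => Real.exp (a s + t * b s))
      (b s * Real.exp (a s + t * b s)) t := by
    simpa [mul_comm] using (((hasDerivAt_id t).mul_const (b s)).const_add (a s)).exp
  have hD : ∑ s ∈ S, Real.exp (a s + t * b s) ≠ 0 :=
    (sum_pos (fun s _ => Real.exp_pos _) hS).ne'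
  rw [← sum_mul_sum_sub_sum_mul_sum]
  exact (HasDerivAt.fun_sum fun s _ => (hw s).mul_const (V s)).div
    (HasDerivAt.fun_sum fun s _ => hw s) hD

lemma abs_softmaxAvg_sub_le {S : Finset ι} (hS : S.Nonempty) {V z₁ z₂ : ι → ℝ} {B H : ℝ}
    (hV : ∀ s ∈ S, ∀ s' ∈ S, |V s - V s'| ≤ H) (hz : ∀ s ∈ S, |z₁ s - z₂ s| ≤ B) :
    |softmaxAvg S V z₁ - softmaxAvg S V z₂| ≤ H * B := by
  have hD (t : ℝ) : 0 < (∑ s ∈ S, Real.exp (z₂ s + t * (z₁ s - z₂ s))) ^ 2 :=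
    pow_pos (sum_pos (fun s _ => Real.exp_pos _) hS) 2
  have hmvt := (convex_univ (𝕜 := ℝ)).norm_image_sub_le_of_norm_hasDerivWithin_le (C := H * B)
    (fun t _ => (hasDerivAt_softmaxAvg_line hS V z₂ (fun s => z₁ s - z₂ s) t).hasDerivWithinAt)
    (fun t _ => by
      rw [Real.norm_eq_abs, abs_div, abs_of_pos (hD t), div_le_iff₀ (hD t)]
      exact abs_sum_sum_mul_mul_sub_le S (fun s _ => (Real.exp_pos _).le) hz hV)
    (Set.mem_univ 0) (Set.mem_univ 1)
  simpa using hmvt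

end Softmax

theorem stmt15 {ι : Type*} (d : ℕ) (S : Finset ι) (hS : S.Nonempty)
    (H : ℝ) (V : ι → ℝ) (hV : ∀ s ∈ S, 0 ≤ V s ∧ V s ≤ H)
    (φ : ι → Fin d → ℝ) (p : ι → (Fin d → ℝ) → ℝ)
    (hp : ∀ s θ, p s θ = Real.exp (φ s ⬝ᵥ θ) / ∑ s' ∈ S, Real.exp (φ s' ⬝ᵥ θ))
    (A : Matrix (Fin d) (Fin d) ℝ) (hA : A.PosDef)
    (θ₁ θ₂ : Fin d → ℝ) :
    |(∑ s ∈ S, p s θ₁ * V s) - ∑ s ∈ S, p s θ₂ * V s| ≤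
      H * (S.sup' hS fun s => Real.sqrt (φ s ⬝ᵥ A⁻¹ *ᵥ φ s)) *
        Real.sqrt ((θ₁ - θ₂) ⬝ᵥ A *ᵥ (θ₁ - θ₂)) := by
  have hsum (θ : Fin d → ℝ) : ∑ s ∈ S, p s θ * V s = softmaxAvg S V fun s => φ s ⬝ᵥ θ := by
    simp only [hp, softmaxAvg, sum_div, div_mul_eq_mul_div]
  have hosc : ∀ s ∈ S, ∀ s' ∈ S, |V s - V s'| ≤ H := fun s hs s' hs' => by
    rw [abs_sub_le_iff]
    constructor <;> linarith [hV s hs, hV s' hs']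
  have hlogits : ∀ s ∈ S, |φ s ⬝ᵥ θ₁ - φ s ⬝ᵥ θ₂| ≤
      (S.sup' hS fun s => √(φ s ⬝ᵥ A⁻¹ *ᵥ φ s)) * √((θ₁ - θ₂) ⬝ᵥ A *ᵥ (θ₁ - θ₂)) :=
    fun s hs => by
      rw [← dotProduct_sub]
      exact (abs_dotProduct_le_of_posDef hA _ _).trans
        (mul_le_mul_of_nonneg_right (le_sup' (fun s => √(φ s ⬝ᵥ A⁻¹ *ᵥ φ s)) hs)
          (Real.sqrt_nonneg _))
  rw [hsum, hsum, mul_assoc]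
  exact abs_softmaxAvg_sub_le hS hosc hlogits
end

section
/- Let λ ≥ L² > 0 and suppose for each i = 1, …, n we are given a finite nonempty set S_i and vectors φ_{i,s} ∈ R^d for s ∈ S_i with ‖φ_{i,s}‖₂ ≤ L, and |S_i| ≤ U for all i. Define A_1 = λ I_d and A_{i+1} = A_i + ∑_{s∈S_i} φ_{i,s} φ_{i,s}^T. Then ∑_{i=1}^n max_{s∈S_i} ‖φ_{i,s}‖²_{A_i^{-1}} ≤ 2 log( det(A_{n+1}) / λ^d ) ≤ 2 d log(1 + nU L² / (dλ)). -/
/-!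
Adding to `A i` only the rank-one term of a maximising `s` multiplies the determinant by
`1 + max_s ‖φ i s‖²_{(A i)⁻¹}` (matrix determinant lemma), and the remaining rank-one terms can
only increase it. Each of these maxima is at most `L² / λ ≤ 1`, where `z ≤ 2 log (1 + z)`, so the
sum of the maxima is bounded by a telescoping sum of `2 log det (A k)`. The second bound is AM-GM
applied to the eigenvalues of `A n`, whose trace is at most `d λ + n U L²`.
-/

open Matrix Finset
open scoped MatrixOrder

theorem prod_le_arith_mean_pow {ι : Type*} (s : Finset ι) {z : ι → ℝ} (hz : ∀ i ∈ s, 0 ≤ z i) :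
    ∏ i ∈ s, z i ≤ ((∑ i ∈ s, z i) / #s) ^ #s := by
  rcases s.eq_empty_or_nonempty with rfl | hs
  · simp
  have hcard : (0 : ℝ) < #s := by exact_mod_cast hs.card_pos
  have amgm := Real.geom_mean_le_arith_mean_weighted s (fun _ => (#s : ℝ)⁻¹) z
    (fun _ _ => by positivity) (by simp [hcard.ne']) hz
  rw [← Finset.mul_sum, inv_mul_eq_div, Real.finsetProd_rpow s z hz] at amgm
  calc ∏ i ∈ s, z i = ((∏ i ∈ s, z i) ^ (#s : ℝ)⁻¹) ^ #s := by
        rw [← Real.rpow_natCast, ← Real.rpow_mul (prod_nonneg hz), inv_mul_cancel₀ hcard.ne',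
          Real.rpow_one]
    _ ≤ _ := by gcongr; exact Real.rpow_nonneg (prod_nonneg hz) _

theorem le_two_mul_log_one_add {z : ℝ} (h0 : 0 ≤ z) (h2 : z ≤ 2) : z ≤ 2 * Real.log (1 + z) := by
  have := Real.le_log_one_add_of_nonneg h0
  rw [div_le_iff₀ (by linarith)] at this
  nlinarith

theorem Fin.sum_univ_sub_telescope {G : Type*} [AddCommGroup G] (f : ℕ → G) (n : ℕ) :
    ∑ i : Fin n, (f (i + 1) - f i) = f n - f 0 := by
  rw [Fin.sum_univ_eq_sum_range (fun i => f (i + 1) - f i), sum_range_sub]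

theorem apply_zero_le_of_fin_le_succ {α : Type*} [Preorder α] {f : ℕ → α} {n : ℕ}
    (h : ∀ i : Fin n, f i ≤ f (i + 1)) : ∀ k ≤ n, f 0 ≤ f k
  | 0, _ => le_rfl
  | k + 1, hk => (apply_zero_le_of_fin_le_succ h k (by omega)).trans (h ⟨k, hk⟩)

namespace Matrix

variable {m : Type*} [Fintype m]

theorem posSemidef_vecMulVec_self (v : m → ℝ) : (vecMulVec v v).PosSemidef := by
  simpa using posSemidef_vecMulVec_self_star v

variable [DecidableEq m]

theorem det_add_vecMulVec {R : Type*} [CommRing R] {Q : Matrix m m R} (hQ : IsUnit Q.det)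
    (u v : m → R) : (Q + vecMulVec u v).det = Q.det * (1 + v ⬝ᵥ Q⁻¹ *ᵥ u) := by
  rw [vecMulVec_eq Unit, det_add_replicateCol_mul_replicateRow hQ, Matrix.mul_assoc,
    ← replicateCol_mulVec, Matrix.det_unique (1 + _), add_apply, one_apply_eq,
    replicateRow_mul_replicateCol_apply]

theorem PosDef.det_le_det_add_sum_vecMulVec {ι : Type*} {Q : Matrix m m ℝ} (hQ : Q.PosDef)
    (s : Finset ι) (v : ι → m → ℝ) : Q.det ≤ (Q + ∑ i ∈ s, vecMulVec (v i) (v i)).det := by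
  classical
  induction s using Finset.induction_on with
  | empty => simp
  | insert a s has ih =>
    have hQs : (Q + ∑ i ∈ s, vecMulVec (v i) (v i)).PosDef :=
      hQ.add_posSemidef (posSemidef_sum s fun i _ => posSemidef_vecMulVec_self (v i))
    have hquad : 0 ≤ v a ⬝ᵥ (Q + ∑ i ∈ s, vecMulVec (v i) (v i))⁻¹ *ᵥ v a := by
      simpa using hQs.inv.posSemidef.dotProduct_mulVec_nonneg (v a)
    rw [sum_insert has, add_left_comm, add_comm, det_add_vecMulVec hQs.det_pos.ne'.isUnit]
    nlinarith [hQs.det_pos]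

theorem PosDef.det_mul_one_add_sup'_le {ι : Type*} {Q : Matrix m m ℝ} (hQ : Q.PosDef)
    (S : Finset ι) (hS : S.Nonempty) (v : ι → m → ℝ) :
    Q.det * (1 + S.sup' hS fun s => v s ⬝ᵥ Q⁻¹ *ᵥ v s) ≤
      (Q + ∑ s ∈ S, vecMulVec (v s) (v s)).det := by
  classical
  obtain ⟨t, ht, hmax⟩ := exists_mem_eq_sup' hS fun s => v s ⬝ᵥ Q⁻¹ *ᵥ v s
  rw [hmax, ← det_add_vecMulVec hQ.det_pos.ne'.isUnit, ← add_sum_erase S _ ht, ← add_assoc]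
  exact (hQ.add_posSemidef (posSemidef_vecMulVec_self (v t))).det_le_det_add_sum_vecMulVec _ _

theorem mul_dotProduct_inv_mulVec_le {Q : Matrix m m ℝ} {lam : ℝ} (hQ : IsUnit Q.det)
    (hlam : 0 ≤ lam) (hle : lam • 1 ≤ Q) (x : m → ℝ) : lam * (x ⬝ᵥ Q⁻¹ *ᵥ x) ≤ x ⬝ᵥ x := by
  -- with `y = Q⁻¹ x`: `0 ≤ ‖x - λ y‖² = ‖x‖² - 2 λ ⟪x, y⟫ + λ² ‖y‖²` and `λ ‖y‖² ≤ yᵀ Q y = ⟪x, y⟫`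
  set y := Q⁻¹ *ᵥ x
  have hQy : Q *ᵥ y = x := by simp [y, mulVec_mulVec, mul_nonsing_inv _ hQ]
  have hlow : lam * (y ⬝ᵥ y) ≤ x ⬝ᵥ y := by
    have := (le_iff.mp hle).dotProduct_mulVec_nonneg y
    simp only [star_trivial, sub_mulVec, hQy, smul_mulVec, one_mulVec, dotProduct_sub,
      dotProduct_smul, smul_eq_mul, dotProduct_comm y x] at this
    linarith
  have hsq : 0 ≤ (x - lam • y) ⬝ᵥ (x - lam • y) := by
    simpa using dotProduct_self_star_nonneg (x - lam • y)
  simp only [dotProduct_sub, sub_dotProduct, dotProduct_smul, smul_dotProduct, smul_eq_mul,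
    dotProduct_comm y x] at hsq
  nlinarith [mul_le_mul_of_nonneg_left hlow hlam]

theorem PosSemidef.det_le_trace_div_pow {M : Matrix m m ℝ} (hM : M.PosSemidef) :
    M.det ≤ (M.trace / Fintype.card m) ^ Fintype.card m := by
  rw [hM.isHermitian.det_eq_prod_eigenvalues, hM.isHermitian.trace_eq_sum_eigenvalues]
  simpa using prod_le_arith_mean_pow univ fun i _ => hM.eigenvalues_nonneg i

theorem PosDef.log_det_div_pow_le {M : Matrix m m ℝ} (hM : M.PosDef) {lam b : ℝ} (hlam : 0 < lam)
    (hm : 0 < Fintype.card m) (htr : M.trace ≤ Fintype.card m * lam + b) :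
    Real.log (M.det / lam ^ Fintype.card m) ≤
      Fintype.card m * Real.log (1 + b / (Fintype.card m * lam)) := by
  have hdet : M.det ≤ (lam * (1 + b / (Fintype.card m * lam))) ^ Fintype.card m := by
    refine hM.posSemidef.det_le_trace_div_pow.trans ?_
    gcongr
    · exact div_nonneg hM.posSemidef.trace_nonneg (Nat.cast_nonneg _)
    · rw [div_le_iff₀ (by positivity)]
      field_simp
      linarith
  rw [← Real.log_pow]
  gcongr
  · exact div_pos hM.det_pos (by positivity)
  · rw [div_le_iff₀ (by positivity), mul_comm, ← mul_pow]
    exact hdet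

end Matrix

section EllipticalPotential

variable {ι m : Type*} [Fintype m] {n : ℕ} {S : Fin n → Finset ι}
  {φ : Fin n → ι → m → ℝ} {A : ℕ → Matrix m m ℝ}

theorem apply_zero_le_of_add_sum_vecMulVec
    (hAs : ∀ i : Fin n, A (i + 1) = A i + ∑ s ∈ S i, vecMulVec (φ i s) (φ i s)) :
    ∀ k ≤ n, A 0 ≤ A k :=
  apply_zero_le_of_fin_le_succ fun i => by
    rw [hAs i]
    exact le_add_of_nonneg_right
      (posSemidef_sum _ fun s _ => posSemidef_vecMulVec_self (φ i s)).nonneg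

theorem sum_sup'_le_two_mul_log_det_div [DecidableEq m]
    (hAs : ∀ i : Fin n, A (i + 1) = A i + ∑ s ∈ S i, vecMulVec (φ i s) (φ i s))
    (hpd : ∀ k ≤ n, (A k).PosDef) (hS : ∀ i, (S i).Nonempty)
    (hle : ∀ i, (S i).sup' (hS i) (fun s => φ i s ⬝ᵥ (A i)⁻¹ *ᵥ φ i s) ≤ 2) :
    ∑ i, (S i).sup' (hS i) (fun s => φ i s ⬝ᵥ (A i)⁻¹ *ᵥ φ i s) ≤
      2 * Real.log ((A n).det / (A 0).det) := by
  have hstep : ∀ i : Fin n, (S i).sup' (hS i) (fun s => φ i s ⬝ᵥ (A i)⁻¹ *ᵥ φ i s) ≤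
      2 * (Real.log (A (i + 1)).det - Real.log (A i).det) := by
    intro i
    have hAi := hpd i i.is_lt.le
    obtain ⟨s, hs⟩ := hS i
    have h0 : 0 ≤ (S i).sup' (hS i) (fun s => φ i s ⬝ᵥ (A i)⁻¹ *ᵥ φ i s) :=
      le_sup'_of_le _ hs (by simpa using hAi.inv.posSemidef.dotProduct_mulVec_nonneg (φ i s))
    refine (le_two_mul_log_one_add h0 (hle i)).trans ?_
    rw [← Real.log_div (hpd (i + 1) i.is_lt).det_pos.ne' hAi.det_pos.ne']
    gcongr 2 * Real.log ?_
    rw [le_div_iff₀ hAi.det_pos, mul_comm, hAs i]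
    exact hAi.det_mul_one_add_sup'_le _ _ _
  calc _ ≤ ∑ i : Fin n, 2 * (Real.log (A (i + 1)).det - Real.log (A i).det) :=
        sum_le_sum fun i _ => hstep i
    _ = 2 * Real.log ((A n).det / (A 0).det) := by
      rw [← mul_sum, Fin.sum_univ_sub_telescope (fun k => Real.log (A k).det),
        Real.log_div (hpd n le_rfl).det_pos.ne' (hpd 0 (Nat.zero_le n)).det_pos.ne']

theorem trace_le_add_mul_of_add_sum_vecMulVec
    (hAs : ∀ i : Fin n, A (i + 1) = A i + ∑ s ∈ S i, vecMulVec (φ i s) (φ i s))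
    {U : ℕ} (hSU : ∀ i, #(S i) ≤ U) {c : ℝ} (hc : 0 ≤ c)
    (hφ : ∀ i, ∀ s ∈ S i, φ i s ⬝ᵥ φ i s ≤ c) :
    (A n).trace ≤ (A 0).trace + n * U * c := by
  have hstep : ∀ i : Fin n, (A (i + 1)).trace - (A i).trace ≤ U * c := by
    intro i
    rw [hAs i, trace_add, add_sub_cancel_left, trace_sum]
    calc ∑ s ∈ S i, (vecMulVec (φ i s) (φ i s)).trace ≤ #(S i) • c :=
          sum_le_card_nsmul _ _ _ fun s hs => (trace_vecMulVec _ _).trans_le (hφ i s hs)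
      _ ≤ U * c := by rw [nsmul_eq_mul]; gcongr; exact_mod_cast hSU i
  have := sum_le_sum (s := univ) fun i _ => hstep i
  rw [Fin.sum_univ_sub_telescope (fun k => (A k).trace), sum_const, card_univ, Fintype.card_fin,
    nsmul_eq_mul] at this
  linarith

end EllipticalPotential

theorem stmt19 {ι : Type*} (d n : ℕ) (hd : 0 < d) (U : ℕ)
    (lam L : ℝ) (hL : 0 < L) (hlam : L ^ 2 ≤ lam)
    (S : Fin n → Finset ι) (hSne : ∀ i, (S i).Nonempty) (hSU : ∀ i, (S i).card ≤ U)
    (φ : Fin n → ι → Fin d → ℝ)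
    (hφ : ∀ i, ∀ s ∈ S i, Real.sqrt (φ i s ⬝ᵥ φ i s) ≤ L)
    (A : ℕ → Matrix (Fin d) (Fin d) ℝ)
    (hA0 : A 0 = lam • (1 : Matrix (Fin d) (Fin d) ℝ))
    (hAs : ∀ i : Fin n, A (i + 1) = A i + ∑ s ∈ S i, vecMulVec (φ i s) (φ i s)) :
    (∑ i : Fin n, (S i).sup' (hSne i) fun s => φ i s ⬝ᵥ (A i)⁻¹ *ᵥ φ i s) ≤
        2 * Real.log ((A n).det / lam ^ d) ∧
      2 * Real.log ((A n).det / lam ^ d) ≤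
        2 * d * Real.log (1 + n * U * L ^ 2 / (d * lam)) := by
  have hlam0 : 0 < lam := (pow_pos hL 2).trans_le hlam
  have hnorm : ∀ i, ∀ s ∈ S i, φ i s ⬝ᵥ φ i s ≤ L ^ 2 := fun i s hs =>
    (Real.sqrt_le_iff.mp (hφ i s hs)).2
  have hmono := apply_zero_le_of_add_sum_vecMulVec hAs
  have hpd0 : (A 0).PosDef := hA0 ▸ PosDef.one.smul hlam0
  have hpd : ∀ k ≤ n, (A k).PosDef := fun k hk => by
    simpa using hpd0.add_posSemidef (hmono k hk)
  have hle : ∀ i, ((S i).sup' (hSne i) fun s => φ i s ⬝ᵥ (A i)⁻¹ *ᵥ φ i s) ≤ 2 :=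
    fun i => sup'_le _ _ fun s hs => by
      have := mul_dotProduct_inv_mulVec_le (hpd i i.is_lt.le).det_pos.ne'.isUnit hlam0.le
        (hA0 ▸ hmono i i.is_lt.le) (φ i s)
      nlinarith [hnorm i s hs]
  have htrace := trace_le_add_mul_of_add_sum_vecMulVec hAs hSU (sq_nonneg L) hnorm
  rw [hA0, trace_smul, trace_one, Fintype.card_fin, smul_eq_mul] at htrace
  have hdet0 : (A 0).det = lam ^ d := by simp [hA0]
  refine ⟨hdet0 ▸ sum_sup'_le_two_mul_log_det_div hAs hpd hSne hle, ?_⟩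
  have hlog := (hpd n le_rfl).log_det_div_pow_le (b := n * U * L ^ 2) hlam0
    (by simpa using hd) (by simpa [mul_comm] using htrace)
  simp only [Fintype.card_fin] at hlog
  linarith
end
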